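/- (One-step distance recursion.) In non-stationary approximate MPI with parameters m ≥ 0 and ℓ ≥ 1 on a finite MDP, for every k ≥ 1 the distance satisfies the pointwise inequality d_k ≤ γ P_{π_*} d_{k−1} − γ P_{π_*} ε_{k−1} + ∑_{i=0}^{m−1} (γ^ℓ P_{k,ℓ})^{i} b_{k−1}, where π_* is any optimal policy (v_{π_*} = v_*) and P_{k,ℓ} = P_{π_k} P_{π_{k−1}} ⋯ P_{π_{k−ℓ+1}}. -/

import Mathlib

structure MDP (X A : Type) [Fintype X] [Fintype A] where
  P : X → A → X → ℝ
  r : X → A → ℝ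
  γ : ℝ
  P_nonneg : ∀ x a y, 0 ≤ P x a y
  P_sum : ∀ x a, ∑ y, P x a y = 1
  γ_pos : 0 < γ
  γ_lt_one : γ < 1

namespace MDP

variable {X A : Type} [Fintype X] [Fintype A]

/-- Bellman operator of a stationary policy. -/
noncomputable def T (M : MDP X A) (π : X → A) (v : X → ℝ) : X → ℝ :=
  fun x => M.r x (π x) + M.γ * ∑ y, M.P x (π x) y * v y

/-- Action-value function. -/
noncomputable def Q (M : MDP X A) (v : X → ℝ) (x : X) (a : A) : ℝ :=
  M.r x a + M.γ * ∑ y, M.P x a y * v y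

/-- `π` is greedy with respect to `v` (action form). -/
def IsGreedy (M : MDP X A) (π : X → A) (v : X → ℝ) : Prop :=
  ∀ x, M.T π v x = ⨆ a : A, M.Q v x a

/-- `π` is greedy with respect to `v` (componentwise max over policies form). -/
def IsGreedyPol (M : MDP X A) (π : X → A) (v : X → ℝ) : Prop :=
  ∀ x, M.T π v x = ⨆ π' : X → A, M.T π' v x

/-- Composed Bellman operator `T_{π_k} T_{π_{k-1}} ⋯ T_{π_{k-n+1}}`. -/
noncomputable def Tcomp (M : MDP X A) (π : ℤ → X → A) : ℕ → ℤ → (X → ℝ) → (X → ℝ)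
  | 0, _ => id
  | (n+1), k => fun v => M.T (π k) (M.Tcomp π n (k-1) v)

/-- Transition kernel of a stationary policy, as a matrix. -/
def Pmat (M : MDP X A) (π : X → A) : Matrix X X ℝ :=
  Matrix.of fun x y => M.P x (π x) y

/-- Composed kernel `P_{π_k} P_{π_{k-1}} ⋯ P_{π_{k-n+1}}`. -/
noncomputable def Pcomp (M : MDP X A) [DecidableEq X] (π : ℤ → X → A) : ℕ → ℤ → Matrix X X ℝ
  | 0, _ => 1
  | (n+1), k => M.Pmat (π k) * M.Pcomp π n (k-1)

/-- `n`-fold products `(γ P_{π_1}) ⋯ (γ P_{π_n})`. -/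
def prodSet (M : MDP X A) [DecidableEq X] : ℕ → Set (Matrix X X ℝ)
  | 0 => {1}
  | (n+1) => {Q | ∃ (π : X → A) (Q' : Matrix X X ℝ), Q' ∈ M.prodSet n ∧ Q = (M.γ • M.Pmat π) * Q'}

/-- `𝕡_n`: convex combinations of `n`-fold products of discounted kernels. -/
noncomputable def Gamma (M : MDP X A) [DecidableEq X] (n : ℕ) : Set (Matrix X X ℝ) :=
  convexHull ℝ (M.prodSet n)

end MDP

/-- Residual `b_k = T_{π_{k+1}} v_k − T_{π_{k+1},ℓ} T_{π_{k+1}} v_k`. -/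
noncomputable def bres {X A : Type} [Fintype X] [Fintype A] (M : MDP X A) (π : ℤ → X → A) (ℓ : ℕ)
    (v : ℕ → X → ℝ) (k : ℕ) : X → ℝ :=
  fun x => M.T (π ((k : ℤ) + 1)) (v k) x
    - M.Tcomp π ℓ ((k : ℤ) + 1) (M.T (π ((k : ℤ) + 1)) (v k)) x

/-- Distance `d_k = v_* − v_k + ε_k`. -/
noncomputable def dres {X : Type} (vstar : X → ℝ) (v err : ℕ → X → ℝ) (k : ℕ) : X → ℝ :=
  fun x => vstar x - v k x + err k x

/-!
Write `w = T_{π_k} v_{k-1}` and `f = T_{π_k,ℓ}`, so that `d_k = v_* - f^m w`. Since `π_k` is greedy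
for `v_{k-1}`, `v_* - w = T_{π_*} v_* - T_{π_k} v_{k-1} ≤ T_{π_*} v_* - T_{π_*} v_{k-1}
= γ P_{π_*} (d_{k-1} - ε_{k-1})`. As `f` is affine with linear part `γ^ℓ P_{k,ℓ}`, the remaining
term `w - f^m w` telescopes into `∑_{i<m} (γ^ℓ P_{k,ℓ})^i (w - f w)`, and `w - f w = b_{k-1}`.
-/

open Matrix

section AffineIterate

variable {n : Type*} [Fintype n] [DecidableEq n] {Q : Matrix n n ℝ} {f : (n → ℝ) → n → ℝ}

theorem iterate_sub_iterate_eq_pow_mulVec (hf : ∀ u w, f u - f w = Q *ᵥ (u - w)) (m : ℕ)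
    (u w : n → ℝ) : f^[m] u - f^[m] w = (Q ^ m) *ᵥ (u - w) := by
  induction m with
  | zero => simp
  | succ m ih =>
    rw [Function.iterate_succ_apply', Function.iterate_succ_apply', hf, ih, mulVec_mulVec,
      ← pow_succ']

theorem sub_iterate_eq_sum_pow_mulVec (hf : ∀ u w, f u - f w = Q *ᵥ (u - w)) (m : ℕ)
    (w : n → ℝ) : w - f^[m] w = ∑ i ∈ Finset.range m, (Q ^ i) *ᵥ (w - f w) := by
  induction m with
  | zero => simp
  | succ m ih =>
    have hstep : f^[m] w - f^[m + 1] w = (Q ^ m) *ᵥ (w - f w) := by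
      rw [Function.iterate_succ_apply, iterate_sub_iterate_eq_pow_mulVec hf]
    rw [Finset.sum_range_succ, ← ih, ← hstep]
    abel

end AffineIterate

namespace MDP

variable {X A : Type} [Fintype X] [Fintype A] (M : MDP X A)

theorem T_sub_T_eq_mulVec (π : X → A) (u w : X → ℝ) :
    M.T π u - M.T π w = (M.γ • M.Pmat π) *ᵥ (u - w) := by
  funext x
  simp only [T, Pmat, mulVec, dotProduct, Matrix.smul_apply, of_apply, Pi.sub_apply, smul_eq_mul,
    mul_sub, Finset.sum_sub_distrib, Finset.mul_sum]
  ring_nf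

theorem Tcomp_sub_Tcomp_eq_mulVec [DecidableEq X] (π : ℤ → X → A) (n : ℕ) (k : ℤ)
    (u w : X → ℝ) :
    M.Tcomp π n k u - M.Tcomp π n k w = (M.γ ^ n • M.Pcomp π n k) *ᵥ (u - w) := by
  induction n generalizing k with
  | zero => simp [Tcomp, Pcomp]
  | succ n ih =>
    change M.T (π k) (M.Tcomp π n (k - 1) u) - M.T (π k) (M.Tcomp π n (k - 1) w) = _
    rw [T_sub_T_eq_mulVec, ih, mulVec_mulVec, Pcomp, smul_mul_smul_comm, ← pow_succ']

theorem T_le_of_isGreedyPol {π : X → A} {v : X → ℝ} (hπ : M.IsGreedyPol π v) (π' : X → A) :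
    M.T π' v ≤ M.T π v := by
  intro x
  rw [hπ x]
  refine le_ciSup (f := fun p : X → A => M.T p v x)
    ((Set.finite_range fun a => M.Q v x a).bddAbove.mono ?_) π'
  rintro _ ⟨p, rfl⟩
  exact ⟨p x, rfl⟩

end MDP

theorem mpi_distance_recursion_general
    {X A : Type} [Fintype X] [Fintype A] [DecidableEq X]
    (M : MDP X A)
    (vpi : (X → A) → X → ℝ) (hvpi : ∀ π : X → A, M.T π (vpi π) = vpi π)
    (vstar : X → ℝ)
    (πstar : X → A) (hopt : vpi πstar = vstar)
    (m ℓ : ℕ)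
    (v : ℕ → X → ℝ) (π : ℤ → X → A) (err : ℕ → X → ℝ)
    (hgreedy : ∀ k : ℕ, 1 ≤ k → M.IsGreedyPol (π (k : ℤ)) (v (k - 1)))
    (hv : ∀ k : ℕ, 1 ≤ k →
      v k = fun x => (M.Tcomp π ℓ (k : ℤ))^[m] (M.T (π (k : ℤ)) (v (k - 1))) x + err k x)
    (k : ℕ) (hk : 1 ≤ k) :
    ∀ x, dres vstar v err k x ≤
      (M.γ • M.Pmat πstar).mulVec (dres vstar v err (k - 1)) x
        - (M.γ • M.Pmat πstar).mulVec (err (k - 1)) x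
        + ∑ i ∈ Finset.range m,
            ((M.γ ^ ℓ • M.Pcomp π ℓ (k : ℤ)) ^ i).mulVec (bres M π ℓ v (k - 1)) x := by
  intro x
  set w := M.T (π k) (v (k - 1))
  have hstar : M.T πstar vstar = vstar := hopt ▸ hvpi πstar
  have hb : bres M π ℓ v (k - 1) = w - M.Tcomp π ℓ k w := by
    have hcast : ((k - 1 : ℕ) : ℤ) + 1 = k := by omega
    funext y
    simp only [bres, hcast, Pi.sub_apply, w]
  have hdist : vstar - v (k - 1) = dres vstar v err (k - 1) - err (k - 1) := by
    funext y
    simp only [dres, Pi.sub_apply]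
    ring
  have hgreedy_x := M.T_le_of_isGreedyPol (hgreedy k hk) πstar x
  have hcontract := congrFun (M.T_sub_T_eq_mulVec πstar vstar (v (k - 1))) x
  have htelescope := congrFun
    (sub_iterate_eq_sum_pow_mulVec (M.Tcomp_sub_Tcomp_eq_mulVec π ℓ k) m w) x
  rw [hdist, mulVec_sub] at hcontract
  rw [hb, ← Finset.sum_apply]
  simp only [dres, hv k hk, hstar, Pi.sub_apply] at hcontract htelescope ⊢
  linarith

/-- One-step distance recursion:
`d_k ≤ γ P_* d_{k−1} − γ P_* ε_{k−1} + ∑_{i=0}^{m−1} (γ^ℓ P_{k,ℓ})^i b_{k−1}`. -/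
theorem mpi_distance_recursion
    {X A : Type} [Fintype X] [Fintype A] [Nonempty X] [Nonempty A] [DecidableEq X]
    (M : MDP X A)
    (vpi : (X → A) → X → ℝ) (hvpi : ∀ π : X → A, M.T π (vpi π) = vpi π)
    (vstar : X → ℝ) (hvstar : ∀ x, vstar x = ⨆ π : X → A, vpi π x)
    (πstar : X → A) (hopt : vpi πstar = vstar)
    (m ℓ : ℕ) (hℓ : 1 ≤ ℓ)
    (v : ℕ → X → ℝ) (π : ℤ → X → A) (err : ℕ → X → ℝ)
    (herr0 : err 0 = fun _ => 0)
    (hgreedy : ∀ k : ℕ, 1 ≤ k → M.IsGreedyPol (π (k : ℤ)) (v (k - 1)))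
    (hv : ∀ k : ℕ, 1 ≤ k →
      v k = fun x => (M.Tcomp π ℓ (k : ℤ))^[m] (M.T (π (k : ℤ)) (v (k - 1))) x + err k x)
    (k : ℕ) (hk : 1 ≤ k) :
    ∀ x, dres vstar v err k x ≤
      (M.γ • M.Pmat πstar).mulVec (dres vstar v err (k - 1)) x
        - (M.γ • M.Pmat πstar).mulVec (err (k - 1)) x
        + ∑ i ∈ Finset.range m,
            ((M.γ ^ ℓ • M.Pcomp π ℓ (k : ℤ)) ^ i).mulVec (bres M π ℓ v (k - 1)) x :=
  mpi_distance_recursion_general M vpi hvpi vstar πstar hopt m ℓ v π err hgreedy hv k hk
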